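/- Let K be a field of characteristic p > 0, let a ∈ K with a not in {x^p − x | x ∈ K}, let L = K[X]/(X^p − X − a), let θ be the class of X and θ_k = 1/(θ − k) for k ∈ F_p. Then for every i ∈ F_p with i ≠ 0 one has θ_0 · θ_i = i^{−1}(θ_i − θ_0), and consequently the total number of nonzero coefficients appearing when each product θ_0 · θ_i (for 0 ≤ i ≤ p − 1) is expanded in the basis (θ_0, …, θ_{p−1}) is at most 3p − 2. -/

import Mathlib

/-!
Every root `x` of `X ^ p - X - a` satisfies `x ^ p = x + a`. For a monic factor `g` of degree `d`,
the sum `s` of its roots (in a splitting field) is `-g.nextCoeff ∈ K`, and additivity of Frobenius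
gives `s ^ p = s + d • a`; unless `p ∣ d`, `s / d` would solve `x ^ p - x = a` in `K`. Hence the
polynomial is irreducible. The product formula is the partial fraction decomposition
`1 / (θ (θ - i)) = i⁻¹ (1 / (θ - i) - 1 / θ)`, so `θ₀ θᵢ` has at most two nonzero coordinates
for `i ≠ 0`, and `θ₀ θ₀` at most `p`.
-/

open Polynomial

theorem monic_X_pow_sub_X_sub_C {R : Type*} [CommRing R] [Nontrivial R] {n : ℕ} (hn : 1 < n)
    (a : R) : (X ^ n - X - C a : R[X]).Monic := by
  monicity!
  simp [hn.le, hn.not_ge]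

theorem natDegree_X_pow_sub_X_sub_C {R : Type*} [CommRing R] [Nontrivial R] {n : ℕ} (hn : 1 < n)
    (a : R) : (X ^ n - X - C a : R[X]).natDegree = n := by
  compute_degree!
  · simp [hn.ne, (zero_lt_one.trans hn).ne']
  · exact hn.le

theorem multiset_sum_pow_char_eq_sum_add_card_nsmul {L : Type*} [CommSemiring L] (p : ℕ)
    [ExpChar L p]
    (s : Multiset L) (b : L) (h : ∀ x ∈ s, x ^ p = x + b) :
    s.sum ^ p = s.sum + Multiset.card s • b := by
  rw [multiset_sum_pow_char, Multiset.map_congr rfl h, Multiset.sum_map_add, Multiset.map_const',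
    Multiset.sum_replicate, Multiset.map_id']

section ArtinSchreier

variable {K : Type*} [Field K] {p : ℕ} [Fact p.Prime] [CharP K p]

theorem exists_pow_sub_eq_natDegree_mul_of_dvd_X_pow_sub_X_sub_C (a : K) {g : K[X]}
    (hg : g.Monic) (hdvd : g ∣ X ^ p - X - C a) : ∃ s : K, s ^ p - s = g.natDegree * a := by
  let ι := algebraMap K g.SplittingField
  have hsplit : (g.map ι).Splits := SplittingField.splits g
  set r := (g.map ι).roots
  have hroot : ∀ x ∈ r, x ^ p = x + ι a := by
    intro x hx
    have hg_x : eval₂ ι x g = 0 := (mem_roots_map hg.ne_zero).mp hx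
    have hf_x := eval₂_eq_zero_of_dvd_of_eval₂_eq_zero ι x hdvd hg_x
    simp only [eval₂_sub, eval₂_X_pow, eval₂_X, eval₂_C] at hf_x
    linear_combination hf_x
  have hsum : ι (-g.nextCoeff) = r.sum := by
    rw [map_neg, ← nextCoeff_map_eq, hsplit.nextCoeff_eq_neg_sum_roots_of_monic (hg.map ι),
      neg_neg]
  have hcard : Multiset.card r = g.natDegree := by
    rw [← hsplit.natDegree_eq_card_roots, natDegree_map]
  refine ⟨-g.nextCoeff, ι.injective ?_⟩
  have hfrob := multiset_sum_pow_char_eq_sum_add_card_nsmul p r (ι a) hroot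
  rw [← hsum, hcard, nsmul_eq_mul] at hfrob
  simp only [map_sub, map_pow, map_mul, map_natCast, hfrob]
  ring

theorem dvd_natDegree_of_dvd_X_pow_sub_X_sub_C {a : K} (ha : ¬ ∃ x : K, x ^ p - x = a) {g : K[X]}
    (hg : g.Monic) (hdvd : g ∣ X ^ p - X - C a) : p ∣ g.natDegree := by
  obtain ⟨s, hs⟩ := exists_pow_sub_eq_natDegree_mul_of_dvd_X_pow_sub_X_sub_C a hg hdvd
  by_contra hpd
  have hd : (g.natDegree : K) ≠ 0 := by rwa [Ne, CharP.cast_eq_zero_iff K p]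
  have hfrob : (g.natDegree : K) ^ p = g.natDegree := by
    rw [← frobenius_def, map_natCast]
  refine ha ⟨s / g.natDegree, ?_⟩
  rw [div_pow, hfrob, ← sub_div, hs, mul_div_cancel_left₀ a hd]

theorem irreducible_X_pow_sub_X_sub_C {a : K} (ha : ¬ ∃ x : K, x ^ p - x = a) :
    Irreducible (X ^ p - X - C a : K[X]) := by
  have hp := (Fact.out : p.Prime).one_lt
  have hf := monic_X_pow_sub_X_sub_C hp a
  refine hf.irreducible_iff_natDegree.mpr ⟨fun h => ?_, fun g h hg hh hgh => ?_⟩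
  · have := natDegree_X_pow_sub_X_sub_C hp a
    rw [h, natDegree_one] at this
    omega
  have hdeg : g.natDegree + h.natDegree = p := by
    rw [← hg.natDegree_mul hh, hgh, natDegree_X_pow_sub_X_sub_C hp a]
  obtain ⟨k, hk⟩ := dvd_natDegree_of_dvd_X_pow_sub_X_sub_C ha hg (hgh ▸ dvd_mul_right g h)
  have hk1 : k ≤ 1 := by nlinarith
  interval_cases k
  · left; simpa using hk
  · right; omega

end ArtinSchreier

theorem inv_mul_inv_sub_eq {F : Type*} [Field F] {x c : F} (hx : x ≠ 0) (hxc : x - c ≠ 0)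
    (hc : c ≠ 0) : x⁻¹ * (x - c)⁻¹ = c⁻¹ * ((x - c)⁻¹ - x⁻¹) := by
  rw [inv_sub_inv hxc hx, sub_sub_cancel]
  field_simp

theorem Module.Basis.card_support_repr_smul_sub_le {ι R M : Type*} [Ring R] [AddCommGroup M]
    [Module R M] (B : Module.Basis ι R M) (c : R) (i j : ι) :
    (B.repr (c • (B i - B j))).support.card ≤ 2 := by
  classical
  rw [map_smul, map_sub, B.repr_self, B.repr_self]
  calc _ ≤ ({i, j} : Finset ι).card := by
        refine Finset.card_le_card (Finsupp.support_smul.trans (Finsupp.support_sub.trans ?_))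
        rw [Finset.insert_eq]
        exact Finset.union_subset_union Finsupp.support_single_subset Finsupp.support_single_subset
    _ ≤ 2 := Finset.card_le_two

theorem Module.Basis.sum_card_support_repr_le_of_smul_sub {ι R M : Type*} [Fintype ι] [Ring R]
    [AddCommGroup M] [Module R M] (B : Module.Basis ι R M) (v : ι → M) (i₀ : ι)
    (hv : ∀ i ≠ i₀, ∃ c : R, v i = c • (B i - B i₀)) :
    ∑ i, (B.repr (v i)).support.card ≤ 3 * Fintype.card ι - 2 := by
  classical
  rw [← Finset.add_sum_erase _ _ (Finset.mem_univ i₀)]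
  have h₀ : (B.repr (v i₀)).support.card ≤ Fintype.card ι := Finset.card_le_univ _
  have hrest : ∑ i ∈ Finset.univ.erase i₀, (B.repr (v i)).support.card
      ≤ (Finset.univ.erase i₀).card * 2 := by
    refine Finset.sum_le_card_nsmul _ _ _ fun i hi => ?_
    obtain ⟨c, hc⟩ := hv i (Finset.ne_of_mem_erase hi)
    rw [hc]
    exact B.card_support_repr_smul_sub_le c i i₀
  rw [Finset.card_erase_of_mem (Finset.mem_univ i₀), Finset.card_univ] at hrest
  have : 0 < Fintype.card ι := Fintype.card_pos_iff.mpr ⟨i₀⟩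
  omega

theorem sub_algebraMap_ne_zero_of_pow_sub_eq {K L : Type*} [Field K] [Field L] [Algebra K L]
    {p : ℕ} {a : K} (ha : ¬ ∃ x : K, x ^ p - x = a) {θ : L}
    (hθ : θ ^ p - θ = algebraMap K L a) (k : K) :
    θ - algebraMap K L k ≠ 0 := by
  intro h
  rw [sub_eq_zero.mp h, ← map_pow, ← map_sub] at hθ
  exact ha ⟨k, (algebraMap K L).injective hθ⟩

theorem AdjoinRoot.root_pow_sub_root {K : Type*} [Field K] (p : ℕ) (a : K) :
    AdjoinRoot.root (X ^ p - X - C a : K[X]) ^ p - AdjoinRoot.root (X ^ p - X - C a : K[X]) =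
      algebraMap K (AdjoinRoot (X ^ p - X - C a : K[X])) a := by
  have h := AdjoinRoot.eval₂_root (X ^ p - X - C a : K[X])
  simp only [eval₂_sub, eval₂_X_pow, eval₂_X, eval₂_C] at h
  rw [AdjoinRoot.algebraMap_eq]
  linear_combination h

/-- In the Artin–Schreier normal basis `θ_k = 1/(θ - k)`, one has
`θ_0 · θ_i = i⁻¹ (θ_i - θ_0)` for `i ≠ 0`, and the total number of nonzero
coefficients of the products `θ_0 · θ_i` in the basis `(θ_0, …, θ_{p-1})`
is at most `3p - 2`. -/
theorem stmt_2 (K : Type*) [Field K] (p : ℕ) [Fact p.Prime] [CharP K p]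
    (a : K) (ha : ¬ ∃ x : K, x ^ p - x = a) :
    ∃ hirr : Irreducible (X ^ p - X - C a : K[X]),
      letI : Fact (Irreducible (X ^ p - X - C a : K[X])) := ⟨hirr⟩
      ∀ Θ : ZMod p → AdjoinRoot (X ^ p - X - C a : K[X]),
        (∀ k : ZMod p, Θ k =
          (AdjoinRoot.root (X ^ p - X - C a : K[X]) -
            algebraMap K (AdjoinRoot (X ^ p - X - C a : K[X]))
              (ZMod.castHom (dvd_refl p) K k))⁻¹) →
        (∀ i : ZMod p, i ≠ 0 →
          Θ 0 * Θ i =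
            algebraMap K (AdjoinRoot (X ^ p - X - C a : K[X]))
              (ZMod.castHom (dvd_refl p) K i⁻¹) * (Θ i - Θ 0)) ∧
        ∀ B : Module.Basis (ZMod p) K (AdjoinRoot (X ^ p - X - C a : K[X])),
          (∀ k : ZMod p, B k = Θ k) →
          ∑ i : ZMod p, (B.repr (Θ 0 * Θ i)).support.card ≤ 3 * p - 2 := by
  have hirr := irreducible_X_pow_sub_X_sub_C ha
  have : Fact (Irreducible (X ^ p - X - C a : K[X])) := ⟨hirr⟩
  refine ⟨hirr, fun Θ hΘ => ?_⟩
  have hne := sub_algebraMap_ne_zero_of_pow_sub_eq (L := AdjoinRoot (X ^ p - X - C a : K[X])) ha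
    (AdjoinRoot.root_pow_sub_root p a)
  have hmul : ∀ i : ZMod p, i ≠ 0 → Θ 0 * Θ i =
      algebraMap K _ (ZMod.castHom (dvd_refl p) K i⁻¹) * (Θ i - Θ 0) := by
    intro i hi
    rw [hΘ, hΘ, map_zero, map_zero, sub_zero, map_inv₀, map_inv₀]
    refine inv_mul_inv_sub_eq (by simpa using hne 0) (hne _) ?_
    simpa only [ne_eq, map_eq_zero] using hi
  refine ⟨hmul, fun B hB => ?_⟩
  simpa only [ZMod.card] using B.sum_card_support_repr_le_of_smul_sub (fun i => Θ 0 * Θ i) 0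
    fun i hi => ⟨ZMod.castHom (dvd_refl p) K i⁻¹, by
      rw [hB, hB, hmul i hi, Algebra.smul_def]⟩
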